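/- arXiv:1805.07771 — 4 statements merged into one kernel-verified Lean document; each statement's English description precedes it below -/
import Mathlib

section
/- Along every characteristic curve, the weighted tangential velocity is conserved: if s ↦ (η(s), a(s), b(s)) is a characteristic curve on an interval I, then the function s ↦ b(s)·(R_κ − ε η(s))/R_κ is constant on I. -/
/-- Along every characteristic curve of the ε-Milne problem with
geometric correction (with `G(η) = −ε/(R_κ − εη)`), the weighted tangential
velocity `b(s)·(R_κ − ε η(s))/R_κ` is constant. -/
theorem weighted_tangential_velocity_conserved_along_characteristics
    (Rκ ε : ℝ) (hR : 0 < Rκ) (hε : 0 < ε)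
    (I : Set ℝ) (hI : Convex ℝ I)
    (η a b : ℝ → ℝ)
    (hdom : ∀ s ∈ I, ε * η s < Rκ)
    (hη : ∀ s ∈ I, HasDerivAt η (a s) s)
    (ha : ∀ s ∈ I, HasDerivAt a ((-ε / (Rκ - ε * η s)) * (b s) ^ 2) s)
    (hb : ∀ s ∈ I, HasDerivAt b (-((-ε / (Rκ - ε * η s)) * a s * b s)) s) :
    ∀ s ∈ I, ∀ t ∈ I,
      b s * (Rκ - ε * η s) / Rκ = b t * (Rκ - ε * η t) / Rκ := by
  intro s hs t ht
  set f : ℝ → ℝ := fun u => b u * (Rκ - ε * η u)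
  have hf : ∀ u ∈ I, HasDerivWithinAt f 0 I u := by
    intro u hu
    have hne : Rκ - ε * η u ≠ 0 := by
      have := hdom u hu; linarith
    have h1 : HasDerivAt f
        ((-((-ε / (Rκ - ε * η u)) * a u * b u)) * (Rκ - ε * η u)
          + b u * (0 - (0 * η u + ε * a u))) u := by
      exact (hb u hu).mul ((hasDerivAt_const u Rκ).sub
        ((hasDerivAt_const u ε).mul (hη u hu)))
    have : (-((-ε / (Rκ - ε * η u)) * a u * b u)) * (Rκ - ε * η u)
          + b u * (0 - (0 * η u + ε * a u)) = 0 := by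
      field_simp
      ring
    rw [this] at h1
    exact h1.hasDerivWithinAt
  have key : ‖f s - f t‖ ≤ 0 * ‖s - t‖ := by
    apply hI.norm_image_sub_le_of_norm_hasDerivWithin_le hf
      (fun u hu => by simp) ht hs
  have : f s = f t := by
    simp at key
    linarith [abs_nonneg (f s - f t), key, abs_sub_abs_le_abs_sub (f s) (f t)]
  simp only [f] at this
  rw [div_eq_div_iff hR.ne' hR.ne', this]
end

section
/- The kinetic weight ζ is invariant along characteristics: if s ↦ (η(s), a(s), b(s)) is a characteristic curve on an interval I with η(s) ≥ 0 for all s ∈ I, then the function s ↦ ζ(η(s), a(s), b(s)) is constant on I. -/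
/-- The kinetic weight `ζ(η, a, b) = √((a² + b²) − ((R_κ − εη)/R_κ)² b²)`. -/
noncomputable def kineticWeight (Rκ ε η a b : ℝ) : ℝ :=
  Real.sqrt ((a ^ 2 + b ^ 2) - ((Rκ - ε * η) / Rκ) ^ 2 * b ^ 2)

/-!
Along a characteristic two quantities are conserved separately: the energy `a² + b²`
(the force `G b² ∂ₐ − G a b ∂_b` is orthogonal to `(a, b)`) and the angular momentum
`(R_κ − εη) b`, whose derivative `−ε a b + (R_κ − εη) · ε a b / (R_κ − εη)` vanishes.
Since `ζ² = (a² + b²) − ((R_κ − εη) b / R_κ)²`, the kinetic weight is a function of these two.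
-/

theorem Convex.eq_of_forall_hasDerivAt_zero {I : Set ℝ} (hI : Convex ℝ I) {f : ℝ → ℝ}
    (hf : ∀ s ∈ I, HasDerivAt f 0 s) {s t : ℝ} (hs : s ∈ I) (ht : t ∈ I) : f s = f t := by
  have h := hI.norm_image_sub_le_of_norm_hasDerivWithin_le (C := 0)
    (fun x hx => (hf x hx).hasDerivWithinAt) (fun _ _ => by simp) ht hs
  simpa [sub_eq_zero] using h

section Characteristic

variable {η a b : ℝ → ℝ} {s : ℝ}

theorem hasDerivAt_sq_add_sq_of_characteristic {g : ℝ}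
    (ha : HasDerivAt a (g * b s ^ 2) s) (hb : HasDerivAt b (-(g * a s * b s)) s) :
    HasDerivAt (fun s => a s ^ 2 + b s ^ 2) 0 s := by
  refine ((ha.pow 2).add (hb.pow 2)).congr_deriv ?_
  norm_num
  ring

theorem hasDerivAt_angularMomentum_of_characteristic {Rκ ε : ℝ} (hne : Rκ - ε * η s ≠ 0)
    (hη : HasDerivAt η (a s) s) (hb : HasDerivAt b (-((-ε / (Rκ - ε * η s)) * a s * b s)) s) :
    HasDerivAt (fun s => (Rκ - ε * η s) * b s) 0 s := by
  refine (((hη.const_mul ε).const_sub Rκ).mul hb).congr_deriv ?_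
  field_simp
  ring

end Characteristic

theorem kineticWeight_eq_sqrt (Rκ ε η a b : ℝ) :
    kineticWeight Rκ ε η a b = Real.sqrt ((a ^ 2 + b ^ 2) - ((Rκ - ε * η) * b / Rκ) ^ 2) := by
  rw [kineticWeight, div_pow, div_pow, mul_pow, mul_div_right_comm]

theorem kineticWeight_conserved_along_characteristics_general
    (Rκ ε : ℝ)
    (I : Set ℝ) (hI : Convex ℝ I)
    (η a b : ℝ → ℝ)
    (hdom : ∀ s ∈ I, ε * η s < Rκ)
    (hη : ∀ s ∈ I, HasDerivAt η (a s) s)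
    (ha : ∀ s ∈ I, HasDerivAt a ((-ε / (Rκ - ε * η s)) * (b s) ^ 2) s)
    (hb : ∀ s ∈ I, HasDerivAt b (-((-ε / (Rκ - ε * η s)) * a s * b s)) s) :
    ∀ s ∈ I, ∀ t ∈ I,
      kineticWeight Rκ ε (η s) (a s) (b s) = kineticWeight Rκ ε (η t) (a t) (b t) := by
  intro s hs t ht
  have hspeed : a s ^ 2 + b s ^ 2 = a t ^ 2 + b t ^ 2 :=
    hI.eq_of_forall_hasDerivAt_zero (f := fun s => a s ^ 2 + b s ^ 2)
      (fun x hx => hasDerivAt_sq_add_sq_of_characteristic (ha x hx) (hb x hx)) hs ht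
  have hmomentum : (Rκ - ε * η s) * b s = (Rκ - ε * η t) * b t :=
    hI.eq_of_forall_hasDerivAt_zero (f := fun s => (Rκ - ε * η s) * b s)
      (fun x hx => hasDerivAt_angularMomentum_of_characteristic
        (sub_ne_zero.mpr (hdom x hx).ne') (hη x hx) (hb x hx)) hs ht
  rw [kineticWeight_eq_sqrt, kineticWeight_eq_sqrt, hspeed, hmomentum]

/-- The kinetic weight `ζ` is invariant along the characteristic
curves of the ε-Milne problem with geometric correction. -/
theorem kineticWeight_conserved_along_characteristics
    (Rκ ε : ℝ) (hR : 0 < Rκ) (hε : 0 < ε)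
    (I : Set ℝ) (hI : Convex ℝ I)
    (η a b : ℝ → ℝ)
    (hdom : ∀ s ∈ I, ε * η s < Rκ)
    (hpos : ∀ s ∈ I, 0 ≤ η s)
    (hη : ∀ s ∈ I, HasDerivAt η (a s) s)
    (ha : ∀ s ∈ I, HasDerivAt a ((-ε / (Rκ - ε * η s)) * (b s) ^ 2) s)
    (hb : ∀ s ∈ I, HasDerivAt b (-((-ε / (Rκ - ε * η s)) * a s * b s)) s) :
    ∀ s ∈ I, ∀ t ∈ I,
      kineticWeight Rκ ε (η s) (a s) (b s) = kineticWeight Rκ ε (η t) (a t) (b t) :=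
  kineticWeight_conserved_along_characteristics_general Rκ ε I hI η a b hdom hη ha hb
end

section
/- Near-grazing velocity estimate in the rescaled boundary layer: let R_κ > 0 and ε > 0 satisfy ε^{1/2} ≤ R_κ/2, let 0 ≤ η ≤ ε^{−1/2}, and suppose a, b ∈ ℝ satisfy a² + b² ≤ b²·( (R_κ − εη)/(R_κ − ε^{1/2}) )². Then a² ≤ (8 ε^{1/2}/R_κ)·b²; in particular |a| ≤ (8/R_κ)^{1/2}·ε^{1/4}·|b|. -/
/-- Near-grazing velocity estimate in the rescaled boundary
layer: if `√ε ≤ R_κ/2`, `0 ≤ η ≤ ε^{−1/2}` and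
`a² + b² ≤ b²((R_κ − εη)/(R_κ − √ε))²` (here `√ε = εL` with `L = ε^{−1/2}`),
then `a² ≤ (8√ε/R_κ)·b²`; in particular `|a| ≤ √(8/R_κ)·ε^{1/4}·|b|`. -/
theorem near_grazing_velocity_estimate
    (Rκ ε η a b : ℝ) (hR : 0 < Rκ) (hε : 0 < ε)
    (hsmall : Real.sqrt ε ≤ Rκ / 2)
    (hη0 : 0 ≤ η) (hηL : η ≤ (Real.sqrt ε)⁻¹)
    (hab : a ^ 2 + b ^ 2 ≤ b ^ 2 * ((Rκ - ε * η) / (Rκ - Real.sqrt ε)) ^ 2) :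
    a ^ 2 ≤ (8 * Real.sqrt ε / Rκ) * b ^ 2 ∧
    |a| ≤ Real.sqrt (8 / Rκ) * ε ^ ((1 : ℝ) / 4) * |b| := by
  set s := Real.sqrt ε with hs_def
  have hs : 0 < s := Real.sqrt_pos.mpr hε
  have hs2 : s ^ 2 = ε := Real.sq_sqrt hε.le
  have hden : 0 < Rκ - s := by linarith
  have hεη : ε * η ≤ s := by
    have : ε * η ≤ ε * s⁻¹ := by
      exact mul_le_mul_of_nonneg_left hηL hε.le
    calc ε * η ≤ ε * s⁻¹ := this
      _ = s := by field_simp; nlinarith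
  have hεη0 : 0 ≤ ε * η := mul_nonneg hε.le hη0
  have key : ((Rκ - ε * η) / (Rκ - s)) ^ 2 ≤ 1 + 8 * s / Rκ := by
    rw [div_pow, div_le_iff₀ (by positivity)]
    have h1 : (Rκ - ε * η) ^ 2 ≤ Rκ ^ 2 := by nlinarith
    have ht : 0 ≤ Rκ - 2 * s := by linarith
    have h2 : Rκ ^ 2 * Rκ ≤ (Rκ + 8 * s) * (Rκ - s) ^ 2 := by
      nlinarith [mul_nonneg (mul_nonneg hs.le hs.le) ht,
        mul_nonneg (mul_nonneg hs.le ht) ht, mul_pos (mul_pos hs hs) hs]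
    have h3 : (1 + 8 * s / Rκ) * (Rκ - s) ^ 2 = (Rκ + 8 * s) * (Rκ - s) ^ 2 / Rκ := by
      field_simp
    rw [h3, le_div_iff₀ hR]
    nlinarith
  have hb2 : (0:ℝ) ≤ b ^ 2 := sq_nonneg b
  have h1 : a ^ 2 ≤ (8 * s / Rκ) * b ^ 2 := by
    have := mul_le_mul_of_nonneg_left key hb2
    nlinarith
  refine ⟨h1, ?_⟩
  have habs : |a| ≤ Real.sqrt ((8 * s / Rκ) * b ^ 2) := by
    rw [← Real.sqrt_sq_eq_abs]
    exact Real.sqrt_le_sqrt h1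
  calc |a| ≤ Real.sqrt ((8 * s / Rκ) * b ^ 2) := habs
    _ = Real.sqrt (8 / Rκ) * ε ^ ((1 : ℝ) / 4) * |b| := by
        rw [show (8 * s / Rκ) * b ^ 2 = (8 / Rκ) * s * b ^ 2 by ring,
          Real.sqrt_mul (by positivity), Real.sqrt_mul (by positivity),
          Real.sqrt_sq_eq_abs]
        congr 1
        congr 1
        rw [hs_def, Real.sqrt_eq_rpow, Real.sqrt_eq_rpow,
          ← Real.rpow_mul hε.le]
        norm_num
end

section
/- Weighted L^∞ estimate for the nonlinear Boltzmann collision term: for every θ > 0 and every 0 ≤ ρ ≤ 1/4 there exists a constant C = C(θ, ρ) > 0 such that for all f : ℝ² → ℝ with ‖f‖_{θ,ρ} < ∞, one has ‖ν^{−1}·Γ[f, f]‖_{θ,ρ} ≤ C·‖f‖_{θ,ρ}², where ‖h‖_{θ,ρ} = sup_{v ∈ ℝ²} (1 + |v|²)^{θ/2} e^{ρ|v|²} |h(v)|. -/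
open MeasureTheory Real

noncomputable section

/-- The two-dimensional standard Maxwellian `μ(v) = (2π)^{−1/2} exp(−|v|²/2)`. -/
def Maxwellian (v : EuclideanSpace ℝ (Fin 2)) : ℝ :=
  (Real.sqrt (2 * Real.pi))⁻¹ * Real.exp (-‖v‖ ^ 2 / 2)

/-- The unit vector of `S¹ ⊂ ℝ²` with angle `φ`. -/
def circleVec (φ : ℝ) : EuclideanSpace ℝ (Fin 2) :=
  (EuclideanSpace.equiv (Fin 2) ℝ).symm ![Real.cos φ, Real.sin φ]

/-- Post-collisional velocity `u* = u + ω(ω·(w − u))`. -/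
def uStar (ω u w : EuclideanSpace ℝ (Fin 2)) : EuclideanSpace ℝ (Fin 2) :=
  u + (inner ℝ ω (w - u) : ℝ) • ω

/-- Post-collisional velocity `w* = w − ω(ω·(w − u))`. -/
def wStar (ω u w : EuclideanSpace ℝ (Fin 2)) : EuclideanSpace ℝ (Fin 2) :=
  w - (inner ℝ ω (w - u) : ℝ) • ω

/-- Hard-sphere collision frequency
`ν(w) = ∫_{ℝ²} ∫_{S¹} |ω·(w−u)| μ(u) dω du`, with the circle parametrized by
angle. -/
def collisionFreq (w : EuclideanSpace ℝ (Fin 2)) : ℝ :=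
  ∫ u : EuclideanSpace ℝ (Fin 2),
    (∫ φ in (0:ℝ)..(2 * Real.pi), |(inner ℝ (circleVec φ) (w - u) : ℝ)|) * Maxwellian u

/-- `K₁[f](w) = μ^{1/2}(w) ∫_{ℝ²} ∫_{S¹} |ω·(w−u)| μ^{1/2}(u) f(u) dω du`. -/
def Kone (f : EuclideanSpace ℝ (Fin 2) → ℝ) (w : EuclideanSpace ℝ (Fin 2)) : ℝ :=
  Real.sqrt (Maxwellian w) *
    ∫ u : EuclideanSpace ℝ (Fin 2),
      ∫ φ in (0:ℝ)..(2 * Real.pi),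
        |(inner ℝ (circleVec φ) (w - u) : ℝ)| * Real.sqrt (Maxwellian u) * f u

/-- `K₂[f](w) = ∫_{ℝ²} ∫_{S¹} |ω·(w−u)| μ^{1/2}(u)
  (μ^{1/2}(w*) f(u*) + μ^{1/2}(u*) f(w*)) dω du`. -/
def Ktwo (f : EuclideanSpace ℝ (Fin 2) → ℝ) (w : EuclideanSpace ℝ (Fin 2)) : ℝ :=
  ∫ u : EuclideanSpace ℝ (Fin 2),
    ∫ φ in (0:ℝ)..(2 * Real.pi),
      |(inner ℝ (circleVec φ) (w - u) : ℝ)| * Real.sqrt (Maxwellian u) *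
        (Real.sqrt (Maxwellian (wStar (circleVec φ) u w)) * f (uStar (circleVec φ) u w)
          + Real.sqrt (Maxwellian (uStar (circleVec φ) u w)) * f (wStar (circleVec φ) u w))

/-- `K = K₂ − K₁`, the compact part of the linearized Boltzmann operator. -/
def Kop (f : EuclideanSpace ℝ (Fin 2) → ℝ) (w : EuclideanSpace ℝ (Fin 2)) : ℝ :=
  Ktwo f w - Kone f w

/-- The linearized Boltzmann operator `L[f] = ν f − K[f]`. -/
def Lop (f : EuclideanSpace ℝ (Fin 2) → ℝ) (w : EuclideanSpace ℝ (Fin 2)) : ℝ :=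
  collisionFreq w * f w - Kop f w

end

noncomputable section

/-- Nonlinear Boltzmann collision term
`Γ[f, g](w) = μ^{−1/2}(w) ∫_{ℝ²} ∫_{S¹} |ω·(w−u)|
  (μ^{1/2}(u*) f(u*) μ^{1/2}(w*) g(w*) − μ^{1/2}(u) f(u) μ^{1/2}(w) g(w)) dω du`. -/
def Gammaop (f g : EuclideanSpace ℝ (Fin 2) → ℝ) (w : EuclideanSpace ℝ (Fin 2)) : ℝ :=
  (Real.sqrt (Maxwellian w))⁻¹ *
    ∫ u : EuclideanSpace ℝ (Fin 2),
      ∫ φ in (0:ℝ)..(2 * Real.pi),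
        |(inner ℝ (circleVec φ) (w - u) : ℝ)| *
          (Real.sqrt (Maxwellian (uStar (circleVec φ) u w)) * f (uStar (circleVec φ) u w) *
              Real.sqrt (Maxwellian (wStar (circleVec φ) u w)) * g (wStar (circleVec φ) u w)
            - Real.sqrt (Maxwellian u) * f u * Real.sqrt (Maxwellian w) * g w)

/-- The weighted `L^∞` norm
`‖h‖_{θ,ρ} = sup_v (1 + |v|²)^{θ/2} e^{ρ|v|²} |h(v)|`, valued in `ℝ≥0∞`. -/
def weightedSupNorm (θ ρ : ℝ) (h : EuclideanSpace ℝ (Fin 2) → ℝ) : ENNReal :=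
  ⨆ v : EuclideanSpace ℝ (Fin 2),
    ENNReal.ofReal ((1 + ‖v‖ ^ 2) ^ (θ / 2) * Real.exp (ρ * ‖v‖ ^ 2) * |h v|)

end

/-!
Energy conservation `|u*|² + |w*|² = |u|² + |w|²` gives
`μ^{1/2}(u*) μ^{1/2}(w*) = μ^{1/2}(u) μ^{1/2}(w)` and makes the weight
`W(v) = (1 + |v|²)^{θ/2} e^{ρ|v|²}` submultiplicative along collisions, `W(w) ≤ W(u*) W(w*)`.
Hence the gain and the loss term are both bounded by `‖f‖² |w - u| μ^{1/2}(u) μ^{1/2}(w) / W(w)`,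
so `W(w) |Γ[f, f](w)| ≤ 4π ‖f‖² ∫ |w - u| μ^{1/2}(u) du`, which grows like `1 + |w|`.
So does `ν(w) ≥ π ∫ |w - u| μ(u) du`: this integral is at least `|w| ∫ μ` because `μ` is even,
and at least `∫ |u| μ - |w| ∫ μ` by the triangle inequality.
-/

theorem le_sqrt_mul_exp_mul_sq {b : ℝ} (hb : 0 < b) (t : ℝ) :
    t ≤ sqrt (2 / b) * exp (b * t ^ 2 / 4) := by
  have hsq : t ^ 2 ≤ 2 / b * exp (b * t ^ 2 / 2) := by
    rw [div_mul_eq_mul_div, le_div_iff₀ hb]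
    nlinarith [add_one_le_exp (b * t ^ 2 / 2), exp_pos (b * t ^ 2 / 2)]
  calc t ≤ |t| := le_abs_self t
    _ = sqrt (t ^ 2) := (sqrt_sq_eq_abs t).symm
    _ ≤ sqrt (2 / b * exp (b * t ^ 2 / 2)) := sqrt_le_sqrt hsq
    _ = sqrt (2 / b) * exp (b * t ^ 2 / 4) := by
      rw [sqrt_mul (by positivity), ← exp_half]
      ring_nf

section Gaussian

variable {V : Type*} [NormedAddCommGroup V] [InnerProductSpace ℝ V] [FiniteDimensional ℝ V]
  [MeasurableSpace V] [BorelSpace V]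

theorem integrable_exp_neg_mul_sq_norm {b : ℝ} (hb : 0 < b) :
    Integrable fun v : V => exp (-b * ‖v‖ ^ 2) := by
  refine (GaussianFourier.integrable_cexp_neg_mul_sq_norm_add (V := V) (b := b)
    (by simpa using hb) 0 0).norm.congr (.of_forall fun v => ?_)
  simp only [zero_mul, add_zero, Complex.norm_exp]
  norm_cast

theorem integrable_norm_mul_exp_neg_mul_sq_norm {b : ℝ} (hb : 0 < b) :
    Integrable fun v : V => ‖v‖ * exp (-b * ‖v‖ ^ 2) := by
  refine ((integrable_exp_neg_mul_sq_norm (half_pos hb)).const_mul (sqrt (2 / b))).mono'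
    (by fun_prop) (.of_forall fun v => ?_)
  rw [norm_of_nonneg (by positivity)]
  calc ‖v‖ * exp (-b * ‖v‖ ^ 2)
      ≤ sqrt (2 / b) * exp (b * ‖v‖ ^ 2 / 4) * exp (-b * ‖v‖ ^ 2) := by
        gcongr; exact le_sqrt_mul_exp_mul_sq hb ‖v‖
    _ = sqrt (2 / b) * exp (-(b / 2) * ‖v‖ ^ 2 - b / 4 * ‖v‖ ^ 2) := by
        rw [mul_assoc, ← exp_add]; ring_nf
    _ ≤ sqrt (2 / b) * exp (-(b / 2) * ‖v‖ ^ 2) := by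
        gcongr; nlinarith [sq_nonneg ‖v‖]

end Gaussian

section MeanDistance

variable {V : Type*} [NormedAddCommGroup V] [MeasurableSpace V] [OpensMeasurableSpace V]
  {μ : Measure V} {g h : V → ℝ}

theorem MeasureTheory.Integrable.norm_sub_mul (hg : Integrable g μ) (hng : Integrable (fun u => ‖u‖ * g u) μ)
    (w : V) : Integrable (fun u => ‖w - u‖ * g u) μ := by
  refine ((hg.norm.const_mul ‖w‖).add hng.norm).mono'
    ((continuous_const.sub continuous_id).norm.aestronglyMeasurable.mul hg.1)
    (.of_forall fun u => ?_)
  simp only [Pi.add_apply, norm_mul, norm_norm, ← add_mul]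
  gcongr
  exact norm_sub_le w u

theorem integral_norm_sub_mul_le (hh0 : 0 ≤ h) (hh : Integrable h μ)
    (hnh : Integrable (fun u => ‖u‖ * h u) μ) (w : V) :
    ∫ u, ‖w - u‖ * h u ∂μ ≤ ‖w‖ * ∫ u, h u ∂μ + ∫ u, ‖u‖ * h u ∂μ := by
  rw [← integral_const_mul, ← integral_add (hh.const_mul _) hnh]
  refine integral_mono (hh.norm_sub_mul hnh w) ((hh.const_mul _).add hnh) fun u => ?_
  simp only [← add_mul]
  exact mul_le_mul_of_nonneg_right (norm_sub_le w u) (hh0 u)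

theorem integral_norm_mul_sub_le_integral_norm_sub_mul (hg0 : 0 ≤ g) (hg : Integrable g μ)
    (hng : Integrable (fun u => ‖u‖ * g u) μ) (w : V) :
    ∫ u, ‖u‖ * g u ∂μ - ‖w‖ * ∫ u, g u ∂μ ≤ ∫ u, ‖w - u‖ * g u ∂μ := by
  rw [← integral_const_mul, ← integral_sub hng (hg.const_mul _)]
  refine integral_mono (hng.sub (hg.const_mul _)) (hg.norm_sub_mul hng w) fun u => ?_
  simp only [← sub_mul]
  refine mul_le_mul_of_nonneg_right ?_ (hg0 u)
  rw [norm_sub_rev]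
  exact norm_sub_norm_le u w

/-- Pair `u` with `-u`: `‖w - u‖ + ‖w + u‖ ≥ 2 ‖w‖`. -/
theorem norm_mul_integral_le_integral_norm_sub_mul [NormedSpace ℝ V] [MeasurableNeg V]
    [μ.IsNegInvariant] (hg0 : 0 ≤ g) (heven : ∀ u, g (-u) = g u) (hg : Integrable g μ)
    (hng : Integrable (fun u => ‖u‖ * g u) μ) (w : V) :
    ‖w‖ * ∫ u, g u ∂μ ≤ ∫ u, ‖w - u‖ * g u ∂μ := by
  have hadd : Integrable (fun u => ‖w + u‖ * g u) μ :=
    (hg.norm_sub_mul hng (-w)).congr (.of_forall fun u => by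
      simp only [← neg_add', norm_neg])
  have hsymm : ∫ u, ‖w + u‖ * g u ∂μ = ∫ u, ‖w - u‖ * g u ∂μ := by
    rw [← integral_neg_eq_self (fun u => ‖w - u‖ * g u) μ]
    simp only [sub_neg_eq_add, heven]
  have hmono : ∫ u, 2 * ‖w‖ * g u ∂μ ≤ ∫ u, (‖w - u‖ * g u + ‖w + u‖ * g u) ∂μ := by
    refine integral_mono (hg.const_mul _) ((hg.norm_sub_mul hng w).add hadd) fun u => ?_
    rw [← add_mul]
    refine mul_le_mul_of_nonneg_right ?_ (hg0 u)
    calc 2 * ‖w‖ = ‖(w - u) + (w + u)‖ := by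
          rw [sub_add_add_cancel, ← two_smul ℝ w, norm_smul, Real.norm_two]
      _ ≤ ‖w - u‖ + ‖w + u‖ := norm_add_le _ _
  rw [integral_const_mul, integral_add (hg.norm_sub_mul hng w) hadd, hsymm] at hmono
  linarith

theorem integral_norm_sub_mul_le_mul_integral_norm_sub_mul [NormedSpace ℝ V]
    [MeasurableNeg V] [μ.IsNegInvariant]
    (hg0 : 0 ≤ g) (heven : ∀ u, g (-u) = g u) (hg : Integrable g μ)
    (hng : Integrable (fun u => ‖u‖ * g u) μ) (hg_pos : 0 < ∫ u, g u ∂μ)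
    (hng_pos : 0 < ∫ u, ‖u‖ * g u ∂μ) (hh0 : 0 ≤ h) (hh : Integrable h μ)
    (hnh : Integrable (fun u => ‖u‖ * h u) μ) (w : V) :
    ∫ u, ‖w - u‖ * h u ∂μ ≤
      ((∫ u, h u ∂μ) / (∫ u, g u ∂μ) + 2 * (∫ u, ‖u‖ * h u ∂μ) / ∫ u, ‖u‖ * g u ∂μ) *
        ∫ u, ‖w - u‖ * g u ∂μ := by
  have hfar := norm_mul_integral_le_integral_norm_sub_mul hg0 heven hg hng w
  have hnear := integral_norm_mul_sub_le_integral_norm_sub_mul hg0 hg hng w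
  have hh_nonneg : 0 ≤ ∫ u, h u ∂μ := integral_nonneg hh0
  have hnh_nonneg : 0 ≤ ∫ u, ‖u‖ * h u ∂μ :=
    integral_nonneg fun u => mul_nonneg (norm_nonneg u) (hh0 u)
  refine (integral_norm_sub_mul_le hh0 hh hnh w).trans ?_
  rw [add_mul]
  refine add_le_add ?_ ?_
  · rw [div_mul_eq_mul_div, le_div_iff₀ hg_pos]
    nlinarith
  · rw [div_mul_eq_mul_div, le_div_iff₀ hng_pos]
    nlinarith

end MeanDistance

local notation "E2" => EuclideanSpace ℝ (Fin 2)

open scoped RealInnerProductSpace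

section Maxwellian

theorem maxwellian_pos (v : E2) : 0 < Maxwellian v := by
  unfold Maxwellian; positivity

theorem continuous_maxwellian : Continuous Maxwellian := by
  unfold Maxwellian; fun_prop

theorem maxwellian_neg (v : E2) : Maxwellian (-v) = Maxwellian v := by
  rw [Maxwellian, Maxwellian, norm_neg]

theorem maxwellian_eq (v : E2) :
    Maxwellian v = (sqrt (2 * π))⁻¹ * exp (-(1 / 2) * ‖v‖ ^ 2) := by
  rw [Maxwellian]; ring_nf

theorem sqrt_maxwellian_eq (v : E2) :
    sqrt (Maxwellian v) = sqrt (sqrt (2 * π))⁻¹ * exp (-(1 / 4) * ‖v‖ ^ 2) := by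
  rw [maxwellian_eq, sqrt_mul (by positivity), ← exp_half]
  ring_nf

theorem integrable_maxwellian : Integrable Maxwellian :=
  ((integrable_exp_neg_mul_sq_norm (by norm_num : (0 : ℝ) < 1 / 2)).const_mul _).congr
    (.of_forall fun v => (maxwellian_eq v).symm)

theorem integrable_norm_mul_maxwellian : Integrable fun v : E2 => ‖v‖ * Maxwellian v :=
  ((integrable_norm_mul_exp_neg_mul_sq_norm (by norm_num : (0 : ℝ) < 1 / 2)).const_mul
    (sqrt (2 * π))⁻¹).congr (.of_forall fun v => by dsimp only; rw [maxwellian_eq]; ring)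

theorem integrable_sqrt_maxwellian : Integrable fun v : E2 => sqrt (Maxwellian v) :=
  ((integrable_exp_neg_mul_sq_norm (by norm_num : (0 : ℝ) < 1 / 4)).const_mul _).congr
    (.of_forall fun v => (sqrt_maxwellian_eq v).symm)

theorem integrable_norm_mul_sqrt_maxwellian :
    Integrable fun v : E2 => ‖v‖ * sqrt (Maxwellian v) :=
  ((integrable_norm_mul_exp_neg_mul_sq_norm (by norm_num : (0 : ℝ) < 1 / 4)).const_mul
    (sqrt (sqrt (2 * π))⁻¹)).congr (.of_forall fun v => by dsimp only; rw [sqrt_maxwellian_eq]; ring)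

theorem integral_maxwellian_pos : 0 < ∫ v : E2, Maxwellian v :=
  integral_pos_of_integrable_nonneg_nonzero (x := 0) continuous_maxwellian integrable_maxwellian
    (fun v => (maxwellian_pos v).le) (maxwellian_pos 0).ne'

theorem integral_sqrt_maxwellian_pos : 0 < ∫ v : E2, sqrt (Maxwellian v) :=
  integral_pos_of_integrable_nonneg_nonzero (x := 0) continuous_maxwellian.sqrt
    integrable_sqrt_maxwellian (fun _ => sqrt_nonneg _) (sqrt_pos.2 (maxwellian_pos 0)).ne'

theorem integral_norm_mul_maxwellian_pos : 0 < ∫ v : E2, ‖v‖ * Maxwellian v := by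
  refine integral_pos_of_integrable_nonneg_nonzero (x := EuclideanSpace.single 0 1)
    (continuous_norm.mul continuous_maxwellian) integrable_norm_mul_maxwellian
    (fun v => mul_nonneg (norm_nonneg v) (maxwellian_pos v).le) ?_
  simp [(maxwellian_pos _).ne']

end Maxwellian

section CircleAverage

theorem inner_circleVec (φ : ℝ) (z : E2) : ⟪circleVec φ, z⟫ = cos φ * z 0 + sin φ * z 1 := by
  simp [circleVec, PiLp.inner_apply, Fin.sum_univ_two]
  ring

theorem norm_circleVec (φ : ℝ) : ‖circleVec φ‖ = 1 := by
  simp [EuclideanSpace.norm_eq, circleVec, Fin.sum_univ_two]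

theorem abs_inner_circleVec_le (φ : ℝ) (z : E2) : |⟪circleVec φ, z⟫| ≤ ‖z‖ := by
  simpa [norm_circleVec] using abs_real_inner_le_norm (circleVec φ) z

theorem integral_inner_circleVec_sq (z : E2) :
    ∫ φ in (0 : ℝ)..2 * π, ⟪circleVec φ, z⟫ ^ 2 = π * ‖z‖ ^ 2 := by
  have hz : ‖z‖ ^ 2 = z 0 ^ 2 + z 1 ^ 2 := by
    simp [EuclideanSpace.norm_sq_eq, Fin.sum_univ_two]
  have hexpand : ∀ φ, ⟪circleVec φ, z⟫ ^ 2 =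
      z 0 ^ 2 * cos φ ^ 2 + (z 1 ^ 2 * sin φ ^ 2 + 2 * z 0 * z 1 * (sin φ * cos φ)) := by
    intro φ; rw [inner_circleVec]; ring
  simp_rw [hexpand]
  have hint : ∀ f : ℝ → ℝ, Continuous f → IntervalIntegrable f volume 0 (2 * π) :=
    fun f hf => hf.intervalIntegrable _ _
  rw [intervalIntegral.integral_add (hint _ (by fun_prop)) (hint _ (by fun_prop)),
    intervalIntegral.integral_add (hint _ (by fun_prop)) (hint _ (by fun_prop)),
    intervalIntegral.integral_const_mul, intervalIntegral.integral_const_mul,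
    intervalIntegral.integral_const_mul, integral_cos_sq, integral_sin_sq, integral_sin_mul_cos₁]
  simp [hz]
  ring

noncomputable def angularIntegral (z : E2) : ℝ :=
  ∫ φ in (0 : ℝ)..2 * π, |⟪circleVec φ, z⟫|

theorem collisionFreq_eq (w : E2) :
    collisionFreq w = ∫ u, angularIntegral (w - u) * Maxwellian u := rfl

theorem continuous_angularIntegral : Continuous angularIntegral := by
  unfold angularIntegral
  simp only [inner_circleVec]
  fun_prop

theorem continuous_abs_inner_circleVec (z : E2) : Continuous fun φ => |⟪circleVec φ, z⟫| := by
  simp only [inner_circleVec]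
  fun_prop

theorem angularIntegral_nonneg (z : E2) : 0 ≤ angularIntegral z :=
  intervalIntegral.integral_nonneg (by positivity) fun _ _ => abs_nonneg _

theorem angularIntegral_le (z : E2) : angularIntegral z ≤ 2 * π * ‖z‖ := by
  have := intervalIntegral.integral_mono_on two_pi_pos.le
    ((continuous_abs_inner_circleVec z).intervalIntegrable _ _)
    (intervalIntegrable_const (μ := volume)) fun φ _ => abs_inner_circleVec_le φ z
  simpa [angularIntegral] using this

/-- `∫ ⟪ω, z⟫² dφ = π ‖z‖²` and `⟪ω, z⟫² ≤ ‖z‖ |⟪ω, z⟫|`. -/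
theorem pi_mul_norm_le_angularIntegral (z : E2) : π * ‖z‖ ≤ angularIntegral z := by
  have hmono : ∫ φ in (0 : ℝ)..2 * π, ⟪circleVec φ, z⟫ ^ 2 ≤
      ∫ φ in (0 : ℝ)..2 * π, ‖z‖ * |⟪circleVec φ, z⟫| := by
    have hsq : Continuous fun φ => ⟪circleVec φ, z⟫ ^ 2 := by
      simp only [inner_circleVec]; fun_prop
    refine intervalIntegral.integral_mono_on two_pi_pos.le (hsq.intervalIntegrable _ _)
      ((continuous_const.mul (continuous_abs_inner_circleVec z)).intervalIntegrable _ _)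
      fun φ _ => ?_
    rw [← sq_abs, sq]
    exact mul_le_mul_of_nonneg_right (abs_inner_circleVec_le φ z) (abs_nonneg _)
  rw [integral_inner_circleVec_sq, intervalIntegral.integral_const_mul] at hmono
  rcases (norm_nonneg z).eq_or_lt with hz | hz
  · rw [← hz, mul_zero]; exact angularIntegral_nonneg z
  · rw [angularIntegral]; nlinarith

end CircleAverage

section CollisionFrequency

theorem integrable_norm_sub_mul_maxwellian (w : E2) :
    Integrable fun u => ‖w - u‖ * Maxwellian u :=
  integrable_maxwellian.norm_sub_mul integrable_norm_mul_maxwellian w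

theorem integrable_angularIntegral_sub_mul_maxwellian (w : E2) :
    Integrable fun u => angularIntegral (w - u) * Maxwellian u := by
  refine ((integrable_norm_sub_mul_maxwellian w).const_mul (2 * π)).mono'
    ((continuous_angularIntegral.comp (continuous_const.sub continuous_id)).mul
      continuous_maxwellian).aestronglyMeasurable (.of_forall fun u => ?_)
  rw [norm_of_nonneg (mul_nonneg (angularIntegral_nonneg _) (maxwellian_pos u).le), ← mul_assoc]
  exact mul_le_mul_of_nonneg_right (angularIntegral_le _) (maxwellian_pos u).le

theorem collisionFreq_nonneg (w : E2) : 0 ≤ collisionFreq w :=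
  integral_nonneg fun u => mul_nonneg (angularIntegral_nonneg _) (maxwellian_pos u).le

theorem pi_mul_integral_norm_sub_mul_maxwellian_le_collisionFreq (w : E2) :
    π * ∫ u, ‖w - u‖ * Maxwellian u ≤ collisionFreq w := by
  rw [collisionFreq_eq, ← integral_const_mul]
  refine integral_mono ((integrable_norm_sub_mul_maxwellian w).const_mul π)
    (integrable_angularIntegral_sub_mul_maxwellian w) fun u => ?_
  rw [← mul_assoc]
  exact mul_le_mul_of_nonneg_right (pi_mul_norm_le_angularIntegral _) (maxwellian_pos u).le

theorem exists_integral_norm_sub_mul_sqrt_maxwellian_le :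
    ∃ C > 0, ∀ w : E2, ∫ u, ‖w - u‖ * sqrt (Maxwellian u) ≤ C * collisionFreq w := by
  set K := (∫ u : E2, sqrt (Maxwellian u)) / (∫ u : E2, Maxwellian u) +
    2 * (∫ u : E2, ‖u‖ * sqrt (Maxwellian u)) / ∫ u : E2, ‖u‖ * Maxwellian u
  have hK : 0 < K := by
    have := integral_sqrt_maxwellian_pos
    have := integral_maxwellian_pos
    have := integral_norm_mul_maxwellian_pos
    have : 0 ≤ ∫ u : E2, ‖u‖ * sqrt (Maxwellian u) :=
      integral_nonneg fun u => mul_nonneg (norm_nonneg u) (sqrt_nonneg _)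
    positivity
  refine ⟨K / π, by positivity, fun w => ?_⟩
  calc ∫ u, ‖w - u‖ * sqrt (Maxwellian u) ≤ K * ∫ u, ‖w - u‖ * Maxwellian u :=
        integral_norm_sub_mul_le_mul_integral_norm_sub_mul (fun u => (maxwellian_pos u).le)
          maxwellian_neg integrable_maxwellian integrable_norm_mul_maxwellian
          integral_maxwellian_pos integral_norm_mul_maxwellian_pos (fun _ => sqrt_nonneg _)
          integrable_sqrt_maxwellian integrable_norm_mul_sqrt_maxwellian w
    _ = K / π * (π * ∫ u, ‖w - u‖ * Maxwellian u) := by field_simp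
    _ ≤ K / π * collisionFreq w := by
        gcongr; exact pi_mul_integral_norm_sub_mul_maxwellian_le_collisionFreq w

end CollisionFrequency

section Weight

variable {V : Type*} [Norm V] {θ ρ : ℝ}

noncomputable def velocityWeight (θ ρ : ℝ) (v : V) : ℝ :=
  (1 + ‖v‖ ^ 2) ^ (θ / 2) * exp (ρ * ‖v‖ ^ 2)

theorem velocityWeight_pos (θ ρ : ℝ) (v : V) : 0 < velocityWeight θ ρ v := by
  unfold velocityWeight; positivity

theorem velocityWeight_le_mul (hθ : 0 ≤ θ) (hρ : 0 ≤ ρ) {w a b : V}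
    (h : ‖w‖ ^ 2 ≤ ‖a‖ ^ 2 + ‖b‖ ^ 2) :
    velocityWeight θ ρ w ≤ velocityWeight θ ρ a * velocityWeight θ ρ b := by
  unfold velocityWeight
  calc (1 + ‖w‖ ^ 2) ^ (θ / 2) * exp (ρ * ‖w‖ ^ 2)
      ≤ ((1 + ‖a‖ ^ 2) * (1 + ‖b‖ ^ 2)) ^ (θ / 2) * exp (ρ * ‖a‖ ^ 2 + ρ * ‖b‖ ^ 2) := by
        gcongr
        · nlinarith [mul_nonneg (sq_nonneg ‖a‖) (sq_nonneg ‖b‖)]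
        · nlinarith
    _ = _ := by rw [mul_rpow (by positivity) (by positivity), exp_add]; ring

theorem abs_le_div_velocityWeight {N : ℝ} {f : V → ℝ}
    (hf : ∀ v, velocityWeight θ ρ v * |f v| ≤ N) (v : V) : |f v| ≤ N / velocityWeight θ ρ v := by
  rw [le_div_iff₀ (velocityWeight_pos θ ρ v), mul_comm]
  exact hf v

theorem nonneg_of_velocityWeight_mul_abs_le {N : ℝ} {f : V → ℝ}
    (hf : ∀ v, velocityWeight θ ρ v * |f v| ≤ N) (v : V) : 0 ≤ N :=
  (mul_nonneg (velocityWeight_pos θ ρ v).le (abs_nonneg _)).trans (hf v)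

theorem abs_mul_abs_le_div_velocityWeight (hθ : 0 ≤ θ) (hρ : 0 ≤ ρ) {Nf Ng : ℝ}
    {f g : V → ℝ} (hf : ∀ v, velocityWeight θ ρ v * |f v| ≤ Nf)
    (hg : ∀ v, velocityWeight θ ρ v * |g v| ≤ Ng) {w a b : V}
    (h : ‖w‖ ^ 2 ≤ ‖a‖ ^ 2 + ‖b‖ ^ 2) :
    |f a| * |g b| ≤ Nf * Ng / velocityWeight θ ρ w := by
  have hfa := abs_le_div_velocityWeight hf a
  calc |f a| * |g b|
      ≤ Nf / velocityWeight θ ρ a * (Ng / velocityWeight θ ρ b) :=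
        mul_le_mul hfa (abs_le_div_velocityWeight hg b) (abs_nonneg _)
          ((abs_nonneg _).trans hfa)
    _ = Nf * Ng / (velocityWeight θ ρ a * velocityWeight θ ρ b) := div_mul_div_comm _ _ _ _
    _ ≤ Nf * Ng / velocityWeight θ ρ w :=
        div_le_div_of_nonneg_left
          (mul_nonneg (nonneg_of_velocityWeight_mul_abs_le hf a)
            (nonneg_of_velocityWeight_mul_abs_le hg a))
          (velocityWeight_pos θ ρ w) (velocityWeight_le_mul hθ hρ h)

end Weight

section WeightedSupNorm

variable {θ ρ : ℝ} {f : E2 → ℝ}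

theorem velocityWeight_mul_abs_le_toReal_weightedSupNorm (hf : weightedSupNorm θ ρ f ≠ ⊤)
    (v : E2) : velocityWeight θ ρ v * |f v| ≤ (weightedSupNorm θ ρ f).toReal :=
  (ENNReal.ofReal_le_iff_le_toReal hf).1
    (le_iSup (fun v => ENNReal.ofReal (velocityWeight θ ρ v * |f v|)) v)

theorem weightedSupNorm_le_ofReal {M : ℝ} (h : ∀ v, velocityWeight θ ρ v * |f v| ≤ M) :
    weightedSupNorm θ ρ f ≤ ENNReal.ofReal M :=
  iSup_le fun v => ENNReal.ofReal_le_ofReal (h v)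

end WeightedSupNorm

section CollisionOperator

theorem norm_uStar_sq_add_norm_wStar_sq {ω : E2} (hω : ‖ω‖ = 1) (u w : E2) :
    ‖uStar ω u w‖ ^ 2 + ‖wStar ω u w‖ ^ 2 = ‖u‖ ^ 2 + ‖w‖ ^ 2 := by
  have hsmul : ‖⟪ω, w - u⟫ • ω‖ ^ 2 = ⟪ω, w - u⟫ ^ 2 := by
    rw [norm_smul, hω, mul_one, norm_eq_abs, sq_abs]
  rw [uStar, wStar, norm_add_sq_real, norm_sub_sq_real, hsmul, real_inner_smul_right,
    real_inner_smul_right, inner_sub_right, real_inner_comm ω u, real_inner_comm ω w]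
  ring

theorem maxwellian_mul_maxwellian (a b : E2) :
    Maxwellian a * Maxwellian b = (sqrt (2 * π))⁻¹ ^ 2 * exp (-(‖a‖ ^ 2 + ‖b‖ ^ 2) / 2) := by
  rw [Maxwellian, Maxwellian, neg_add, add_div, exp_add]
  ring

theorem sqrt_maxwellian_uStar_mul_sqrt_maxwellian_wStar {ω : E2} (hω : ‖ω‖ = 1) (u w : E2) :
    sqrt (Maxwellian (uStar ω u w)) * sqrt (Maxwellian (wStar ω u w)) =
      sqrt (Maxwellian u) * sqrt (Maxwellian w) := by
  rw [← sqrt_mul (maxwellian_pos _).le, ← sqrt_mul (maxwellian_pos _).le,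
    maxwellian_mul_maxwellian, maxwellian_mul_maxwellian, norm_uStar_sq_add_norm_wStar_sq hω]

noncomputable def collisionIntegrand (f g : E2 → ℝ) (w u : E2) (φ : ℝ) : ℝ :=
  |⟪circleVec φ, w - u⟫| *
    (sqrt (Maxwellian (uStar (circleVec φ) u w)) * f (uStar (circleVec φ) u w) *
        sqrt (Maxwellian (wStar (circleVec φ) u w)) * g (wStar (circleVec φ) u w)
      - sqrt (Maxwellian u) * f u * sqrt (Maxwellian w) * g w)

theorem gammaop_eq (f g : E2 → ℝ) (w : E2) :
    Gammaop f g w =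
      (sqrt (Maxwellian w))⁻¹ * ∫ u, ∫ φ in (0 : ℝ)..2 * π, collisionIntegrand f g w u φ := rfl

variable {θ ρ Nf Ng : ℝ} {f g : E2 → ℝ}

theorem abs_collisionIntegrand_le (hθ : 0 ≤ θ) (hρ : 0 ≤ ρ)
    (hf : ∀ v, velocityWeight θ ρ v * |f v| ≤ Nf) (hg : ∀ v, velocityWeight θ ρ v * |g v| ≤ Ng)
    (w u : E2) (φ : ℝ) :
    |collisionIntegrand f g w u φ| ≤
      2 * (Nf * Ng / velocityWeight θ ρ w) * sqrt (Maxwellian w) *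
        (‖w - u‖ * sqrt (Maxwellian u)) := by
  set K := Nf * Ng / velocityWeight θ ρ w
  have hω := norm_circleVec φ
  have habs : ∀ a b : E2, |sqrt (Maxwellian a) * f a * sqrt (Maxwellian b) * g b| =
      sqrt (Maxwellian a) * sqrt (Maxwellian b) * (|f a| * |g b|) := fun a b => by
    rw [abs_mul, abs_mul, abs_mul, abs_of_nonneg (sqrt_nonneg _), abs_of_nonneg (sqrt_nonneg _)]
    ring
  have hgain : |f (uStar (circleVec φ) u w)| * |g (wStar (circleVec φ) u w)| ≤ K :=
    abs_mul_abs_le_div_velocityWeight hθ hρ hf hg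
      (by rw [norm_uStar_sq_add_norm_wStar_sq hω]; nlinarith [sq_nonneg ‖u‖])
  have hloss : |f u| * |g w| ≤ K :=
    abs_mul_abs_le_div_velocityWeight hθ hρ hf hg (by nlinarith [sq_nonneg ‖u‖])
  rw [collisionIntegrand, abs_mul, abs_abs]
  calc _ ≤ ‖w - u‖ * (sqrt (Maxwellian u) * sqrt (Maxwellian w) * K +
        sqrt (Maxwellian u) * sqrt (Maxwellian w) * K) := by
        refine mul_le_mul (abs_inner_circleVec_le φ _) ((abs_sub _ _).trans ?_)
          (abs_nonneg _) (norm_nonneg _)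
        rw [habs, habs, sqrt_maxwellian_uStar_mul_sqrt_maxwellian_wStar hω]
        gcongr
    _ = _ := by ring

theorem abs_gammaop_le (hθ : 0 ≤ θ) (hρ : 0 ≤ ρ)
    (hf : ∀ v, velocityWeight θ ρ v * |f v| ≤ Nf) (hg : ∀ v, velocityWeight θ ρ v * |g v| ≤ Ng)
    (w : E2) :
    |Gammaop f g w| ≤
      4 * π * (Nf * Ng / velocityWeight θ ρ w) * ∫ u, ‖w - u‖ * sqrt (Maxwellian u) := by
  set c := 2 * (Nf * Ng / velocityWeight θ ρ w) * sqrt (Maxwellian w)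
  have hangle : ∀ u, ‖∫ φ in (0 : ℝ)..2 * π, collisionIntegrand f g w u φ‖ ≤
      2 * π * c * (‖w - u‖ * sqrt (Maxwellian u)) := fun u => by
    have := intervalIntegral.norm_integral_le_of_norm_le_const (a := 0) (b := 2 * π)
      fun φ _ => (norm_eq_abs _).trans_le (abs_collisionIntegrand_le hθ hρ hf hg w u φ)
    rw [sub_zero, abs_of_pos two_pi_pos] at this
    exact this.trans_eq (by ring)
  have hvel := norm_integral_le_of_norm_le
    ((integrable_sqrt_maxwellian.norm_sub_mul integrable_norm_mul_sqrt_maxwellian w).const_mul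
      (2 * π * c)) (.of_forall hangle)
  have hsqrt := sqrt_pos.2 (maxwellian_pos w)
  rw [integral_const_mul, norm_eq_abs] at hvel
  rw [gammaop_eq, abs_mul, abs_inv, abs_of_pos hsqrt, inv_mul_le_iff₀ hsqrt]
  exact hvel.trans_eq (by ring)

theorem velocityWeight_mul_abs_inv_collisionFreq_mul_gammaop_le {C : ℝ} (hC : 0 ≤ C)
    (hB : ∀ w : E2, ∫ u, ‖w - u‖ * sqrt (Maxwellian u) ≤ C * collisionFreq w)
    (hθ : 0 ≤ θ) (hρ : 0 ≤ ρ)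
    (hf : ∀ v, velocityWeight θ ρ v * |f v| ≤ Nf) (hg : ∀ v, velocityWeight θ ρ v * |g v| ≤ Ng)
    (w : E2) :
    velocityWeight θ ρ w * |(collisionFreq w)⁻¹ * Gammaop f g w| ≤ 4 * π * C * (Nf * Ng) := by
  have hW := velocityWeight_pos θ ρ w
  have hN : 0 ≤ Nf * Ng := mul_nonneg (nonneg_of_velocityWeight_mul_abs_le hf w)
    (nonneg_of_velocityWeight_mul_abs_le hg w)
  have hν := collisionFreq_nonneg w
  rw [abs_mul, abs_of_nonneg (inv_nonneg.2 hν)]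
  calc velocityWeight θ ρ w * ((collisionFreq w)⁻¹ * |Gammaop f g w|)
      ≤ velocityWeight θ ρ w * ((collisionFreq w)⁻¹ * (4 * π *
          (Nf * Ng / velocityWeight θ ρ w) * ∫ u, ‖w - u‖ * sqrt (Maxwellian u))) := by
        gcongr; exact abs_gammaop_le hθ hρ hf hg w
    _ = 4 * π * (Nf * Ng) * ((collisionFreq w)⁻¹ * ∫ u, ‖w - u‖ * sqrt (Maxwellian u)) := by
        field_simp
    _ ≤ 4 * π * (Nf * Ng) * C := by gcongr; exact inv_mul_le_of_le_mul₀ hν hC ((hB w).trans_eq (mul_comm _ _))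
    _ = 4 * π * C * (Nf * Ng) := by ring

end CollisionOperator

/-- Weighted `L^∞` estimate for the nonlinear Boltzmann
collision term: for every `θ > 0` and `0 ≤ ρ ≤ 1/4` there is `C > 0` such
that `‖ν^{−1} Γ[f, f]‖_{θ,ρ} ≤ C ‖f‖_{θ,ρ}²` whenever `‖f‖_{θ,ρ} < ∞`. -/
theorem nonlinear_collision_weighted_estimate :
    ∀ θ : ℝ, 0 < θ → ∀ ρ : ℝ, 0 ≤ ρ → ρ ≤ 1 / 4 →
      ∃ C : ℝ, 0 < C ∧
        ∀ f : EuclideanSpace ℝ (Fin 2) → ℝ,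
          weightedSupNorm θ ρ f < ⊤ →
          weightedSupNorm θ ρ (fun v => (collisionFreq v)⁻¹ * Gammaop f f v)
            ≤ ENNReal.ofReal C * (weightedSupNorm θ ρ f) ^ 2 := by
  intro θ hθ ρ hρ _
  obtain ⟨C, hC, hB⟩ := exists_integral_norm_sub_mul_sqrt_maxwellian_le
  refine ⟨4 * π * C, by positivity, fun f hf => ?_⟩
  have hfN := velocityWeight_mul_abs_le_toReal_weightedSupNorm hf.ne
  calc weightedSupNorm θ ρ (fun v => (collisionFreq v)⁻¹ * Gammaop f f v)
      ≤ ENNReal.ofReal (4 * π * C * ((weightedSupNorm θ ρ f).toReal *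
          (weightedSupNorm θ ρ f).toReal)) :=
        weightedSupNorm_le_ofReal
          (velocityWeight_mul_abs_inv_collisionFreq_mul_gammaop_le hC.le hB hθ.le hρ hfN hfN)
    _ = ENNReal.ofReal (4 * π * C) * (weightedSupNorm θ ρ f) ^ 2 := by
        rw [ENNReal.ofReal_mul (by positivity), ← sq, ENNReal.ofReal_pow ENNReal.toReal_nonneg,
          ENNReal.ofReal_toReal hf.ne]
end
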